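/- Let β = 0.53 and define the cubic polynomial B(t) = 8t(1 − t)·[(1 − 2√2/3)·t + √2/3 − 1/4]. Then for all real numbers x, y with 0 ≤ y ≤ 1 and 0 ≤ x ≤ y − B(y), one has (y − x) + (2^β − 1)·B(y) + B(x) ≥ 2·B((x + y)/2). -/

import Mathlib

/-!
For fixed `y ∈ [0, 1]` the defect `twoPointGap c y x` of the inequality (with `c = 2^β - 1`)
is a cubic in `x` whose `x²` and `x³` coefficients are nonpositive, so it is concave on `[0, ∞)`
and it suffices to check the endpoints `x = 0` and `x = y - B(y)`. At `x = 0` the defect is a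
polynomial in `y` that is nonnegative on `[0, 1]`. At `x = y - B(y)`, Taylor expansion of the
cubic `B` around `y` with step `h = B(y)` shows that the defect equals `h · Φ(y)`, and `Φ ≥ 0`
on `[0, 1]` is a polynomial inequality that is tight to about `10⁻⁴` near `y ≈ 0.631`; it
needs `2^0.53 - 1 ≥ 0.443928`.
-/

/-- The cubic polynomial `B(t) = 8t(1−t)[(1 − 2√2/3)t + √2/3 − 1/4]`. -/
noncomputable def Bcubic (t : ℝ) : ℝ :=
  8 * (t * (1 - t)) * ((1 - 2 * Real.sqrt 2 / 3) * t + Real.sqrt 2 / 3 - 1 / 4)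

open Real Set

theorem concaveOn_cubic {c₀ c₁ c₂ c₃ : ℝ} (h₂ : c₂ ≤ 0) (h₃ : c₃ ≤ 0) :
    ConcaveOn ℝ (Ici 0) fun x => c₀ + c₁ * x + c₂ * x ^ 2 + c₃ * x ^ 3 := by
  refine ⟨convex_Ici 0, fun a ha b hb μ ν hμ hν hμν => ?_⟩
  obtain rfl : ν = 1 - μ := by linarith
  have hcurv : c₂ + c₃ * ((1 + μ) * a + (2 - μ) * b) ≤ 0 := by
    have : 0 ≤ (1 + μ) * a + (2 - μ) * b := by nlinarith [mem_Ici.1 ha, mem_Ici.1 hb]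
    nlinarith
  -- for the cubic `p`: `p(μa + (1-μ)b) - μ p(a) - (1-μ) p(b)` is minus this product
  have hdefect :
      μ * (1 - μ) * (a - b) ^ 2 * (c₂ + c₃ * ((1 + μ) * a + (2 - μ) * b)) ≤ 0 :=
    mul_nonpos_of_nonneg_of_nonpos (by positivity) hcurv
  simp only [smul_eq_mul]
  linear_combination hdefect

lemma sqrt_two_mem_Icc : √2 ∈ Icc 1.41421356 1.41421357 := by
  constructor
  · rw [le_sqrt (by norm_num) (by norm_num)]; norm_num
  · rw [sqrt_le_left (by norm_num)]; norm_num

lemma le_two_rpow_053 : (1.443928 : ℝ) ≤ 2 ^ (0.53 : ℝ) := by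
  have h : (1.443928 : ℝ) ^ (100 : ℝ) ≤ 2 ^ (53 : ℝ) := by norm_num
  calc (1.443928 : ℝ) = ((1.443928 : ℝ) ^ (100 : ℝ)) ^ (100⁻¹ : ℝ) := by
        rw [← rpow_mul (by norm_num)]; norm_num
    _ ≤ ((2 : ℝ) ^ (53 : ℝ)) ^ (100⁻¹ : ℝ) := by gcongr
    _ = 2 ^ (0.53 : ℝ) := by rw [← rpow_mul (by norm_num)]; norm_num

lemma Bcubic_nonneg {t : ℝ} (ht₀ : 0 ≤ t) (ht₁ : t ≤ 1) : 0 ≤ Bcubic t := by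
  obtain ⟨hs₁, hs₂⟩ := sqrt_two_mem_Icc
  have : 0 ≤ (1 - 2 * √2 / 3) * t + √2 / 3 - 1 / 4 := by nlinarith
  have : 0 ≤ t * (1 - t) := mul_nonneg ht₀ (by linarith)
  unfold Bcubic
  positivity

noncomputable def twoPointGap (c y x : ℝ) : ℝ :=
  (y - x) + c * Bcubic y + Bcubic x - 2 * Bcubic ((x + y) / 2)

lemma concaveOn_twoPointGap (c : ℝ) {y : ℝ} (hy : y ≤ 1) :
    ConcaveOn ℝ (Ici 0) (twoPointGap c y) := by
  obtain ⟨hs₁, hs₂⟩ := sqrt_two_mem_Icc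
  refine (concaveOn_cubic (c₀ := twoPointGap c y 0)
    (c₁ := -1 + (8 * √2 - 10) * y + (6 - 4 * √2) * y ^ 2)
    (c₂ := 5 - 4 * √2 + (6 - 4 * √2) * y) (c₃ := 4 * √2 - 6) ?_ (by linarith)).congr ?_
  · nlinarith [mul_nonneg (sub_nonneg.2 hy) (by linarith : (0 : ℝ) ≤ 6 - 4 * √2)]
  · intro x _
    simp only [twoPointGap, Bcubic]
    ring

lemma twoPointGap_zero_nonneg {c y : ℝ} (hc : 0.443928 ≤ c) (hy₀ : 0 ≤ y)
    (hy₁ : y ≤ 1) : 0 ≤ twoPointGap c y 0 := by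
  obtain ⟨hs₁, hs₂⟩ := sqrt_two_mem_Icc
  have hs₁' : 0 ≤ √2 - 1.41421356 := by linarith
  have hs₂' : 0 ≤ 1.41421357 - √2 := by linarith
  have hy2 : 0 ≤ y * (1 - y) := mul_nonneg hy₀ (by linarith)
  have hc' : 0 ≤ c - 0.443928 := by linarith
  have hB := Bcubic_nonneg hy₀ hy₁
  simp only [twoPointGap, Bcubic] at hB ⊢
  nlinarith [mul_nonneg hc' hB, mul_nonneg hy2 hy2,
    mul_nonneg (mul_nonneg hy2 hy₀) hs₁', mul_nonneg (mul_nonneg hy2 hy₀) hs₂']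

/-- `Φ(y)`: the coefficients are `B''(y) / 4` and `-B''' / 8`. -/
noncomputable def endFactor (c y : ℝ) : ℝ :=
  c + (5 - 4 * √2 + (8 * √2 - 12) * y) * Bcubic y + (6 - 4 * √2) * Bcubic y ^ 2

lemma twoPointGap_sub_Bcubic (c y : ℝ) :
    twoPointGap c y (y - Bcubic y) = Bcubic y * endFactor c y := by
  simp only [twoPointGap, endFactor, Bcubic]
  ring

lemma endFactor_nonneg {c y : ℝ} (hc : 0.443928 ≤ c) (hy₀ : 0 ≤ y) (hy₁ : y ≤ 1) :
    0 ≤ endFactor c y := by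
  obtain ⟨hs₁, hs₂⟩ := sqrt_two_mem_Icc
  have hs₁' : 0 ≤ √2 - 1.41421356 := by linarith
  have hs₂' : 0 ≤ 1.41421357 - √2 := by linarith
  have h1 : 0 ≤ 1 - y := by linarith
  have hy2 : 0 ≤ y * (1 - y) := mul_nonneg hy₀ h1
  -- `Φ` nearly vanishes at `y₀ = 9487 / 15037`: for `c = 0.443928` it is `(y - y₀)²` times
  -- this quartic plus about `1.1 · 10⁻⁴`.
  have hW : 0 ≤ (157764965929160090 / 13943550324832953
        - 368732723454161536 / 51126351191054161 * √2)
      + (-22504194651264 / 309094241423 + 529536079844608 / 10200109966959 * √2) * y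
      + (14054062504 / 20555579 - 982458450896 / 2035002321 * √2) * y ^ 2
      + (-8549312 / 4101 + 199542272 / 135333 * √2) * y ^ 3
      + (1408 - 8960 / 9 * √2) * y ^ 4 := by
    nlinarith [hy2, mul_nonneg hy2 hy2, mul_nonneg hy2 hy₀, mul_nonneg hy2 h1,
      mul_nonneg hs₁' (pow_nonneg hy₀ 4), mul_nonneg hs₂' (pow_nonneg hy₀ 4),
      mul_nonneg hs₁' (pow_nonneg hy₀ 2), mul_nonneg hs₂' (pow_nonneg hy₀ 2)]
  have hΦ : 0 ≤ c + (-94 / 3 + 64 / 3 * √2) * y + (1126 / 3 - 2384 / 9 * √2) * y ^ 2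
      + (-5296 / 3 + 1248 * √2) * y ^ 3 + (11624 / 3 - 24656 / 9 * √2) * y ^ 4
      + (-11584 / 3 + 8192 / 3 * √2) * y ^ 5 + (1408 - 8960 / 9 * √2) * y ^ 6 := by
    nlinarith [mul_nonneg (sq_nonneg (y - 9487 / 15037)) hW,
      mul_nonneg hs₁' hy₀, mul_nonneg hs₂' hy₀]
  have hs2 : √2 ^ 2 = 2 := sq_sqrt (by norm_num)
  simp only [endFactor, Bcubic]
  linear_combination hΦ - (-32 / 3 * y + 416 / 3 * y ^ 2 - 256 / 9 * y ^ 2 * √2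
    - 2048 / 3 * y ^ 3 + 512 / 3 * y ^ 3 * √2 + 4480 / 3 * y ^ 4 - 3328 / 9 * y ^ 4 * √2
    - 4352 / 3 * y ^ 5 + 1024 / 3 * y ^ 5 * √2 + 512 * y ^ 6 - 1024 / 9 * y ^ 6 * √2) * hs2

lemma twoPointGap_nonneg {c x y : ℝ} (hc : 0.443928 ≤ c) (hy₀ : 0 ≤ y) (hy₁ : y ≤ 1)
    (hx₀ : 0 ≤ x) (hx : x ≤ y - Bcubic y) : 0 ≤ twoPointGap c y x := by
  have hx_mem : x ∈ segment ℝ 0 (y - Bcubic y) := by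
    rw [segment_eq_Icc (hx₀.trans hx)]
    exact ⟨hx₀, hx⟩
  have h_end : 0 ≤ twoPointGap c y (y - Bcubic y) := by
    rw [twoPointGap_sub_Bcubic]
    exact mul_nonneg (Bcubic_nonneg hy₀ hy₁) (endFactor_nonneg hc hy₀ hy₁)
  calc 0 ≤ min (twoPointGap c y 0) (twoPointGap c y (y - Bcubic y)) :=
        le_min (twoPointGap_zero_nonneg hc hy₀ hy₁) h_end
    _ ≤ twoPointGap c y x :=
        (concaveOn_twoPointGap c hy₁).ge_on_segment (mem_Ici.2 le_rfl) (hx₀.trans hx)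
          hx_mem

/-- for `β = 0.53`, `0 ≤ y ≤ 1` and `0 ≤ x ≤ y − B(y)`,
`(y−x) + (2^β − 1) B(y) + B(x) ≥ 2 B((x+y)/2)`. -/
theorem two_point_cubic_linear (x y : ℝ) (hy0 : 0 ≤ y) (hy1 : y ≤ 1)
    (hx0 : 0 ≤ x) (hx : x ≤ y - Bcubic y) :
    (y - x) + ((2 : ℝ) ^ (0.53 : ℝ) - 1) * Bcubic y + Bcubic x ≥
      2 * Bcubic ((x + y) / 2) := by
  have hc : (0.443928 : ℝ) ≤ 2 ^ (0.53 : ℝ) - 1 := by linarith [le_two_rpow_053]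
  have := twoPointGap_nonneg hc hy0 hy1 hx0 hx
  unfold twoPointGap at this
  linarith
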